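/- arXiv:1708.05566 — 7 statements merged into one kernel-verified Lean document; each statement's English description precedes it below -/
import Mathlib

section
/- Let G be a group, θ an involutive automorphism of G, K = {g ∈ G : θ(g) = g} its subgroup of fixed points, and τ : G → G the twist map τ(g) = g·θ(g)⁻¹. Then G = τ(G)·K holds if and only if τ(τ(G)) = τ(G). -/
open scoped Pointwise

/-- `G = τ(G)·K` holds iff `τ(τ(G)) = τ(G)`. -/
theorem polar_iff_twist_twist_eq {G : Type*} [Group G] (θ : G ≃* G)
    (hθ : ∀ g, θ (θ g) = g)
    (K : Set G) (hK : K = {g : G | θ g = g})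
    (τ : G → G) (hτ : ∀ g, τ g = g * (θ g)⁻¹) :
    (Set.univ : Set G) = (τ '' Set.univ) * K ↔ τ '' (τ '' Set.univ) = τ '' Set.univ := by
  subst hK
  have hθτ : ∀ g, θ (τ g) = (τ g)⁻¹ := by
    intro g
    simp [hτ, hθ, mul_inv_rev]
  have hττ : ∀ g, τ (τ g) = τ g * τ g := by
    intro g
    rw [hτ (τ g), hθτ, inv_inv]
  constructor
  · intro h
    apply Set.Subset.antisymm
    · rintro _ ⟨_, ⟨g, -, rfl⟩, rfl⟩
      exact ⟨τ g, trivial, rfl⟩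
    · rintro _ ⟨g, -, rfl⟩
      have hg : g ∈ (τ '' Set.univ) * {g : G | θ g = g} := h ▸ Set.mem_univ g
      obtain ⟨_, ⟨x, -, rfl⟩, k, hk, rfl⟩ := hg
      refine ⟨τ x, ⟨x, trivial, rfl⟩, ?_⟩
      show τ (τ x) = τ (τ x * k)
      simp only [Set.mem_setOf_eq] at hk
      rw [hττ, hτ (τ x * k), map_mul, hθτ, hk, mul_inv_rev, inv_inv]
      group
  · intro h
    apply Set.eq_of_subset_of_subset _ (Set.subset_univ _)
    rintro g -
    have : τ g ∈ τ '' (τ '' Set.univ) := by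
      rw [h]; exact ⟨g, trivial, rfl⟩
    obtain ⟨_, ⟨x, -, rfl⟩, hx⟩ := this
    rw [hττ] at hx
    refine ⟨τ x, ⟨x, trivial, rfl⟩, (τ x)⁻¹ * g, ?_, by group⟩
    show θ ((τ x)⁻¹ * g) = (τ x)⁻¹ * g
    rw [map_mul, map_inv, hθτ, inv_inv]
    have : θ g = (τ x * τ x)⁻¹ * g := by
      rw [hx, hτ]; group
    rw [this]; group
end

section
/- Let G be a group, θ an involutive automorphism of G, K = {g ∈ G : θ(g) = g} its subgroup of fixed points, and τ : G → G the twist map τ(g) = g·θ(g)⁻¹. Then G = τ(G)·K holds if and only if nucl(τ(G)) = τ(G), where for X ⊆ G the nucleus is nucl(X) = {x ∈ X : for every k ∈ ℕ there exists y ∈ X with x = y^(2^k)}. -/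
open scoped Pointwise

/-- `G = τ(G)·K` iff `nucl(τ(G)) = τ(G)`, where
`nucl X = {x ∈ X | ∀ k, ∃ y ∈ X, x = y ^ (2 ^ k)}`. -/
theorem polar_iff_nucleus_eq {G : Type*} [Group G] (θ : G ≃* G)
    (hθ : ∀ g, θ (θ g) = g)
    (K : Set G) (hK : K = {g : G | θ g = g})
    (τ : G → G) (hτ : ∀ g, τ g = g * (θ g)⁻¹)
    (nucl : Set G → Set G)
    (hnucl : ∀ X : Set G, nucl X = {x ∈ X | ∀ k : ℕ, ∃ y ∈ X, x = y ^ (2 ^ k)}) :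
    (Set.univ : Set G) = (τ '' Set.univ) * K ↔ nucl (τ '' Set.univ) = τ '' Set.univ := by
  have hθτ : ∀ g, θ (τ g) = (τ g)⁻¹ := by
    intro g
    simp [hτ, hθ, mul_inv_rev]
  rw [hnucl]
  constructor
  · intro hG
    have sqrt : ∀ x ∈ τ '' Set.univ, ∃ y ∈ τ '' Set.univ, x = y ^ 2 := by
      rintro x ⟨g, -, rfl⟩
      have hg : g ∈ (τ '' Set.univ) * K := hG ▸ Set.mem_univ g
      obtain ⟨p, hp, k, hk, rfl⟩ := hg
      obtain ⟨h, -, rfl⟩ := hp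
      refine ⟨τ h, ⟨h, Set.mem_univ h, rfl⟩, ?_⟩
      have hkfix : θ k = k := by rw [hK] at hk; exact hk
      rw [hτ (τ h * k), map_mul, hθτ, hkfix, mul_inv_rev, inv_inv, sq]
      group
    ext x
    simp only [Set.mem_setOf_eq]
    constructor
    · rintro ⟨hx, -⟩; exact hx
    · intro hx
      refine ⟨hx, ?_⟩
      intro k
      induction k with
      | zero => exact ⟨x, hx, by simp⟩
      | succ n ih =>
        obtain ⟨y, hy, hxy⟩ := ih
        obtain ⟨z, hz, hyz⟩ := sqrt y hy
        refine ⟨z, hz, ?_⟩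
        rw [hxy, hyz, ← pow_mul]
        congr 1
        rw [pow_succ, Nat.mul_comm]
  · intro hn
    ext g
    simp only [Set.mem_univ, true_iff]
    have hτg : τ g ∈ {x ∈ τ '' Set.univ | ∀ k : ℕ, ∃ y ∈ τ '' Set.univ, x = y ^ (2 ^ k)} := by
      rw [hn]; exact ⟨g, Set.mem_univ g, rfl⟩
    obtain ⟨-, hroots⟩ := hτg
    obtain ⟨y, hy, hsq⟩ := hroots 1
    rw [pow_one] at hsq
    have h2 : y ^ 2 = g * (θ g)⁻¹ := by rw [← hsq, hτ]
    have hθy : θ y = y⁻¹ := by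
      obtain ⟨h, -, rfl⟩ := hy
      exact hθτ h
    have hkmem : y⁻¹ * g ∈ K := by
      rw [hK]
      show θ (y⁻¹ * g) = y⁻¹ * g
      rw [map_mul, map_inv, hθy, inv_inv]
      have := congrArg (fun z => y⁻¹ * z * θ g) h2
      simpa [sq, mul_assoc] using this
    have : y * (y⁻¹ * g) ∈ (τ '' Set.univ) * K := Set.mul_mem_mul hy hkmem
    simpa using this
end

section
/- Let G be a group with subgroups K, T, U, and suppose: T normalizes U; U ∩ T = {1}; there are subgroups M, A of T with M·A = T and M ∩ A = {1}; M = K ∩ (T·U); and G = K·T·U. Then the map K × A × U → G, (k, a, u) ↦ kau, is a bijection. -/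
open scoped Pointwise

/-- Abstract refined Iwasawa decomposition. If `T` normalizes `U`,
`U ∩ T = 1`, `M, A ≤ T` with `M·A = T` and `M ∩ A = 1`, `M = K ∩ (T·U)` and
`G = K·T·U`, then `(k, a, u) ↦ k * a * u` is a bijection `K × A × U → G`. -/
theorem refined_iwasawa_abstract {G : Type*} [Group G]
    (K T U M A : Subgroup G)
    (hMT : M ≤ T) (hAT : A ≤ T)
    (hnorm : ∀ t ∈ T, ∀ u ∈ U, t * u * t⁻¹ ∈ U)
    (hUT : U ⊓ T = ⊥)
    (hMA : (M : Set G) * (A : Set G) = (T : Set G))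
    (hMAinter : M ⊓ A = ⊥)
    (hM : (M : Set G) = (K : Set G) ∩ ((T : Set G) * (U : Set G)))
    (hG : (Set.univ : Set G) = (K : Set G) * (T : Set G) * (U : Set G)) :
    Function.Bijective (fun x : K × A × U => (x.1 : G) * (x.2.1 : G) * (x.2.2 : G)) := by
  constructor
  · rintro ⟨⟨k, hk⟩, ⟨a, ha⟩, ⟨u, hu⟩⟩ ⟨⟨k', hk'⟩, ⟨a', ha'⟩, ⟨u', hu'⟩⟩ h
    simp only [Subtype.mk.injEq, Prod.mk.injEq] at h ⊢
    -- h : k * a * u = k' * a' * u'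
    have hmK : k'⁻¹ * k ∈ K := mul_mem (inv_mem hk') hk
    have hrw : k'⁻¹ * k = (a' * a⁻¹) * (a * (u' * u⁻¹) * a⁻¹) := by
      have hk2 : k = k' * a' * u' * u⁻¹ * a⁻¹ := by rw [← h]; group
      rw [hk2]; group
    have hmTU : k'⁻¹ * k ∈ (T : Set G) * (U : Set G) := by
      rw [hrw]
      exact Set.mul_mem_mul (mul_mem (hAT ha') (inv_mem (hAT ha)))
        (hnorm _ (hAT ha) _ (mul_mem hu' (inv_mem hu)))
    have hmM : k'⁻¹ * k ∈ M := by
      rw [← SetLike.mem_coe, hM]; exact ⟨hmK, hmTU⟩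
    have h3 : a'⁻¹ * ((k'⁻¹ * k) * a) = u' * u⁻¹ := by
      have h2 : (k'⁻¹ * k) * a = a' * (u' * u⁻¹) := by
        calc (k'⁻¹ * k) * a = k'⁻¹ * (k * a * u) * u⁻¹ := by group
          _ = k'⁻¹ * (k' * a' * u') * u⁻¹ := by rw [h]
          _ = a' * (u' * u⁻¹) := by group
      rw [h2]; group
    have hT3 : a'⁻¹ * ((k'⁻¹ * k) * a) ∈ T :=
      mul_mem (inv_mem (hAT ha')) (mul_mem (hMT hmM) (hAT ha))
    have hU3 : a'⁻¹ * ((k'⁻¹ * k) * a) ∈ U := by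
      rw [h3]; exact mul_mem hu' (inv_mem hu)
    have hone : a'⁻¹ * ((k'⁻¹ * k) * a) = 1 := by
      have : a'⁻¹ * ((k'⁻¹ * k) * a) ∈ U ⊓ T := ⟨hU3, hT3⟩
      rw [hUT] at this; exact this
    have huu : u = u' := by
      have h4 : u' * u⁻¹ = 1 := by rw [← h3, hone]
      exact (mul_inv_eq_one.mp h4).symm
    have hma' : (k'⁻¹ * k) * a = a' := by
      have := hone
      calc (k'⁻¹ * k) * a = a' * (a'⁻¹ * ((k'⁻¹ * k) * a)) := by group
        _ = a' * 1 := by rw [hone]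
        _ = a' := mul_one a'
    have hmA : k'⁻¹ * k ∈ A := by
      have : k'⁻¹ * k = a' * a⁻¹ := by rw [← hma']; group
      rw [this]; exact mul_mem ha' (inv_mem ha)
    have hmone : k'⁻¹ * k = 1 := by
      have : k'⁻¹ * k ∈ M ⊓ A := ⟨hmM, hmA⟩
      rw [hMAinter] at this; exact this
    have hkk : k = k' := (inv_mul_eq_one.mp hmone).symm
    have haa : a = a' := by rw [← hma', hmone, one_mul]
    exact ⟨hkk, haa, huu⟩
  · intro g
    have hg : g ∈ (K : Set G) * (T : Set G) * (U : Set G) := by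
      rw [← hG]; trivial
    obtain ⟨kt, hkt, u, hu, hgu⟩ := hg
    obtain ⟨k, hk, t, ht, hkt'⟩ := hkt
    have htMA : t ∈ (M : Set G) * (A : Set G) := by rw [hMA]; exact ht
    obtain ⟨m, hm, a, ha, hma⟩ := htMA
    have hmK : m ∈ K := by
      have : m ∈ (K : Set G) ∩ ((T : Set G) * (U : Set G)) := by rw [← hM]; exact hm
      exact this.1
    refine ⟨⟨⟨k * m, mul_mem hk hmK⟩, ⟨a, ha⟩, ⟨u, hu⟩⟩, ?_⟩
    simp only
    rw [← hgu, ← hkt', ← hma]; group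
end

section
/- In the ring R = ℝ[t, t⁻¹] of real Laurent polynomials, the quadratic polynomial X² − (t + 4 + t⁻¹)X + 1 ∈ R[X] has no root in R. In particular, it does not split into linear factors over R. -/
open Polynomial LaurentPolynomial

/-! If `r` is a root of `X² - aX + 1`, then `r * (a - r) = 1`, so `r` and `a - r` are units of
`R[T;T⁻¹]`. Over a domain the units of `R[T;T⁻¹]` are monomials `c Tᵏ` (clear denominators and use
that the divisors of `Xⁿ` in `R[X]` are `c Xⁱ`), so `a = r + (a - r)` has at most two nonzero
coefficients, whereas `T + 4 + T⁻¹` has three. -/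

theorem Polynomial.exists_eq_C_mul_X_pow_of_dvd_X_pow {R : Type*} [CommRing R] [IsDomain R]
    {p : R[X]} {n : ℕ} (h : p ∣ X ^ n) : ∃ (c : R) (i : ℕ), p = C c * X ^ i := by
  obtain ⟨i, -, u, hu⟩ := (dvd_prime_pow prime_X n).mp h
  obtain ⟨c, -, hc⟩ := Polynomial.isUnit_iff.mp u⁻¹.isUnit
  refine ⟨c, i, ?_⟩
  rw [hc, ← hu, mul_left_comm, Units.inv_mul, mul_one]

theorem Polynomial.mul_sub_eq_one_of_isRoot {R : Type*} [CommRing R] {a r : R}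
    (h : (X ^ 2 - C a * X + 1 : R[X]).IsRoot r) : r * (a - r) = 1 := by
  simp only [IsRoot, eval_add, eval_sub, eval_mul, eval_pow, eval_C, eval_X, eval_one] at h
  linear_combination -h

namespace LaurentPolynomial

variable {R : Type*}

theorem card_support_C_mul_T_add_C_mul_T_le [Semiring R] (c d : R) (k l : ℤ) :
    (C c * T k + C d * T l).coeff.support.card ≤ 2 := by
  have hsub : (C c * T k + C d * T l).coeff.support ⊆ {k, l} := by
    rw [AddMonoidAlgebra.coeff_add]
    exact Finsupp.support_add.trans
      (Finset.union_subset_union (support_C_mul_T c k) (support_C_mul_T d l))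
  exact (Finset.card_le_card hsub).trans Finset.card_le_two

variable [CommRing R] [IsDomain R]

theorem exists_eq_C_mul_T_of_isUnit {f : R[T;T⁻¹]} (hf : IsUnit f) :
    ∃ (c : R) (k : ℤ), f = C c * T k := by
  obtain ⟨g, hfg⟩ := hf.exists_right_inv
  obtain ⟨n, p, hp⟩ := f.exists_T_pow
  obtain ⟨m, q, hq⟩ := g.exists_T_pow
  have hpq : p * q = X ^ (n + m) := toLaurent_injective <| by
    rw [map_mul, hp, hq, toLaurent_X_pow, Nat.cast_add, T_add]
    linear_combination (T n * T m : R[T;T⁻¹]) * hfg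
  obtain ⟨c, i, rfl⟩ := exists_eq_C_mul_X_pow_of_dvd_X_pow ⟨q, hpq.symm⟩
  refine ⟨c, i - n, ?_⟩
  calc f = f * T n * T (-n) := by simp
    _ = C c * T (i - n) := by rw [← hp, toLaurent_C_mul_X_pow, mul_T_assoc, sub_eq_add_neg]

theorem not_isRoot_of_two_lt_card_support {a : R[T;T⁻¹]} (ha : 2 < a.coeff.support.card)
    (r : R[T;T⁻¹]) : ¬ (X ^ 2 - Polynomial.C a * X + 1 : R[T;T⁻¹][X]).IsRoot r := by
  intro hr
  have hrs := mul_sub_eq_one_of_isRoot hr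
  obtain ⟨c, k, hc⟩ := exists_eq_C_mul_T_of_isUnit (.of_mul_eq_one _ hrs)
  obtain ⟨d, l, hd⟩ := exists_eq_C_mul_T_of_isUnit (.of_mul_eq_one_right _ hrs)
  have ha' : a = C c * T k + C d * T l := by rw [← hc, ← hd, add_sub_cancel]
  exact (card_support_C_mul_T_add_C_mul_T_le c d k l).not_gt (ha' ▸ ha)

end LaurentPolynomial

theorem LaurentPolynomial.support_T_one_add_four_add_T_neg_one :
    (T 1 + 4 + T (-1) : ℝ[T;T⁻¹]).coeff.support = {-1, 0, 1} := by
  rw [show (4 : ℝ[T;T⁻¹]) = LaurentPolynomial.C 4 from (map_ofNat _ 4).symm]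
  ext m
  simp only [AddMonoidAlgebra.coeff_add, Finsupp.mem_support_iff, Finsupp.add_apply, T_apply,
    C_apply, Finset.mem_insert, Finset.mem_singleton]
  split_ifs <;> norm_num <;> omega

/-- In `R = ℝ[t, t⁻¹]`, the polynomial `X² − (t + 4 + t⁻¹)·X + 1 ∈ R[X]`
has no root in `R`. -/
theorem laurent_quadratic_no_root :
    ∀ r : LaurentPolynomial ℝ,
      ¬ (Polynomial.X ^ 2
          - Polynomial.C (LaurentPolynomial.T 1 + 4 + LaurentPolynomial.T (-1)) * Polynomial.X
          + 1 : Polynomial (LaurentPolynomial ℝ)).IsRoot r :=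
  not_isRoot_of_two_lt_card_support (by rw [support_T_one_add_four_add_T_neg_one]; decide)
end

section
/- Let R = ℝ[t, t⁻¹] and let v ∈ SL₂(R) be the matrix v = [[1 + (1+t)(1+t⁻¹), 1+t], [1+t⁻¹, 1]]. Then the characteristic polynomial of v equals X² − (t + 4 + t⁻¹)X + 1, and v is not conjugate within GL₂(R) to any diagonal matrix over R. In particular, v is not conjugate within SL₂(R) to a diagonal matrix with entries in ℝ. -/
/-!
Conjugation preserves trace and determinant, and a diagonal 2×2 matrix `diag(a, b)` has
`tr² - 4 det = (a - b)²`, which stays nonnegative under any ring map to an ordered ring.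
For `v` this fails after evaluating at `t = -2`: there `det v = 1` and `tr v = -2 + 4 - 1/2 = 3/2`.
-/

open Polynomial LaurentPolynomial Matrix

namespace Matrix

variable {R K : Type*} [CommRing R] [CommRing K] [LinearOrder K] [IsStrictOrderedRing K]

theorem four_mul_det_le_sq_trace_diagonal (φ : R →+* K) (d : Fin 2 → R) :
    4 * φ (diagonal d).det ≤ φ (diagonal d).trace ^ 2 := by
  rw [det_diagonal, trace_diagonal, Fin.prod_univ_two, Fin.sum_univ_two, map_mul, map_add]
  nlinarith [sq_nonneg (φ (d 0) - φ (d 1))]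

theorem four_mul_det_le_sq_trace_of_units_conj_eq_diagonal (φ : R →+* K)
    {M : Matrix (Fin 2) (Fin 2) R} (g : GL (Fin 2) R) {d : Fin 2 → R}
    (h : (g : Matrix (Fin 2) (Fin 2) R) * M * (g⁻¹ : GL (Fin 2) R) = diagonal d) :
    4 * φ M.det ≤ φ M.trace ^ 2 := by
  rw [← det_units_conj g M, ← trace_units_conj g M, h]
  exact four_mul_det_le_sq_trace_diagonal φ d

end Matrix

/-- For `R = ℝ[t,t⁻¹]` and
`v = [[1 + (1+t)(1+t⁻¹), 1+t], [1+t⁻¹, 1]]` (an element of `SL₂(R)`), the characteristic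
polynomial of `v` is `X² − (t + 4 + t⁻¹)·X + 1`, and `v` is not conjugate within `GL₂(R)`
to any diagonal matrix over `R`; in particular not within `SL₂(R)` to a diagonal matrix
with entries in `ℝ`. -/
theorem laurent_twist_not_diagonalizable
    (v : Matrix (Fin 2) (Fin 2) (LaurentPolynomial ℝ))
    (hv : v = !![1 + (1 + LaurentPolynomial.T 1) * (1 + LaurentPolynomial.T (-1)),
                 1 + LaurentPolynomial.T 1;
                 1 + LaurentPolynomial.T (-1), 1]) :
    v.det = 1 ∧
    v.charpoly
      = Polynomial.X ^ 2
        - Polynomial.C (LaurentPolynomial.T 1 + 4 + LaurentPolynomial.T (-1)) * Polynomial.X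
        + 1 ∧
    (∀ g : GL (Fin 2) (LaurentPolynomial ℝ), ∀ d : Fin 2 → LaurentPolynomial ℝ,
      (g : Matrix (Fin 2) (Fin 2) (LaurentPolynomial ℝ)) * v
          * ((g⁻¹ : GL (Fin 2) (LaurentPolynomial ℝ)) : Matrix (Fin 2) (Fin 2) (LaurentPolynomial ℝ))
        ≠ Matrix.diagonal d) ∧
    (∀ g : Matrix.SpecialLinearGroup (Fin 2) (LaurentPolynomial ℝ), ∀ d : Fin 2 → ℝ,
      (g : Matrix (Fin 2) (Fin 2) (LaurentPolynomial ℝ)) * v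
          * ((g⁻¹ : Matrix.SpecialLinearGroup (Fin 2) (LaurentPolynomial ℝ))
              : Matrix (Fin 2) (Fin 2) (LaurentPolynomial ℝ))
        ≠ Matrix.diagonal (fun i => algebraMap ℝ (LaurentPolynomial ℝ) (d i))) := by
  have hT : (T 1 : LaurentPolynomial ℝ) * T (-1) = 1 := by rw [← T_add]; norm_num
  have hdet : v.det = 1 := by rw [hv, det_fin_two_of]; ring
  have htr : v.trace = T 1 + 4 + T (-1) := by
    rw [hv, trace_fin_two_of]; linear_combination hT
  let evalAtNegTwo := LaurentPolynomial.eval₂ (RingHom.id ℝ) (Units.mk0 (-2 : ℝ) (by norm_num))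
  have htr_eval : evalAtNegTwo v.trace = 3 / 2 := by
    simp only [htr, evalAtNegTwo, map_add, eval₂_T, map_ofNat]
    norm_num
  have not_GL_conj (g : GL (Fin 2) (LaurentPolynomial ℝ)) (d : Fin 2 → LaurentPolynomial ℝ) :
      (g : Matrix (Fin 2) (Fin 2) (LaurentPolynomial ℝ)) * v * (g⁻¹ : GL (Fin 2) _)
        ≠ diagonal d := by
    intro h
    have := four_mul_det_le_sq_trace_of_units_conj_eq_diagonal evalAtNegTwo g h
    rw [hdet, htr_eval, map_one] at this
    norm_num at this
  refine ⟨hdet, ?_, not_GL_conj, fun g d => not_GL_conj (SpecialLinearGroup.toGL g) _⟩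
  rw [charpoly_fin_two, htr, hdet, Polynomial.C_1]
end

section
/- Let n ∈ ℕ. The map K × A × U → SL_{n+1}(ℝ), (k, a, u) ↦ k·a·u, is a bijection, where K = SO(n+1), A is the group of diagonal matrices with positive diagonal entries and determinant 1, and U is the group of upper triangular matrices with all diagonal entries equal to 1. (Refined Iwasawa decomposition of SL_{n+1}(ℝ).) -/
/-!
For `g ∈ SL_{n+1}(ℝ)` the Gram matrix `gᵀ g` is positive definite, so its LDL decomposition,
after fixing the signs of the diagonal, gives a Cholesky factor: `gᵀ g = Tᵀ T` with `T` upper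
triangular with positive diagonal. Then `k = g T⁻¹` is orthogonal, and `T = a u` with `a` the
diagonal of `T`. Uniqueness reduces to the fact that an orthogonal upper triangular matrix `P`
with positive diagonal is `1`: its inverse `Pᵀ` is upper triangular too, so `P` is diagonal
with entries `±1`.
-/

open Matrix

namespace Matrix

variable {ι R K : Type*}

theorem transpose_mul_self_mul_inv_eq_one [Fintype ι] [DecidableEq ι] [CommRing R]
    {G T : Matrix ι ι R} (hT : IsUnit T.det) (h : Gᵀ * G = Tᵀ * T) :
    (G * T⁻¹)ᵀ * (G * T⁻¹) = 1 := by
  rw [transpose_mul, Matrix.mul_assoc, ← Matrix.mul_assoc Gᵀ, h, Matrix.mul_assoc,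
    mul_nonsing_inv _ hT, Matrix.mul_one, ← transpose_mul, mul_nonsing_inv _ hT, transpose_one]

theorem transpose_mul_self_of_orthogonal_mul [Fintype ι] [DecidableEq ι] [CommRing R]
    {k : Matrix ι ι R} (hk : kᵀ * k = 1) (T : Matrix ι ι R) : (k * T)ᵀ * (k * T) = Tᵀ * T := by
  rw [transpose_mul, Matrix.mul_assoc, ← Matrix.mul_assoc kᵀ, hk, Matrix.one_mul]

variable [LinearOrder ι]

theorem IsDiag.isUpperTriangular [Zero R] {M : Matrix ι ι R} (hM : M.IsDiag) :
    M.IsUpperTriangular :=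
  fun _ _ h => hM h.ne'

variable [Fintype ι]

theorem IsUpperTriangular.mul_apply_self [NonUnitalNonAssocSemiring R] {M N : Matrix ι ι R}
    (hM : M.IsUpperTriangular) (hN : N.IsUpperTriangular) (i : ι) :
    (M * N) i i = M i i * N i i := by
  rw [mul_apply, Finset.sum_eq_single i]
  · intro j _ hj
    rcases hj.lt_or_gt with h | h
    · rw [hM h, zero_mul]
    · rw [hN h, mul_zero]
  · simp

theorem IsDiag.mul_unitriangular_apply_self [NonAssocSemiring R] {a u : Matrix ι ι R}
    (ha : a.IsDiag) (hu : u.IsUpperTriangular) (hud : ∀ i, u i i = 1) (i : ι) :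
    (a * u) i i = a i i := by
  rw [ha.isUpperTriangular.mul_apply_self hu, hud, mul_one]

theorem IsDiag.eq_of_mul_unitriangular_eq [NonAssocSemiring R] {a₁ a₂ u₁ u₂ : Matrix ι ι R}
    (ha₁ : a₁.IsDiag) (hu₁ : u₁.IsUpperTriangular) (hud₁ : ∀ i, u₁ i i = 1)
    (ha₂ : a₂.IsDiag) (hu₂ : u₂.IsUpperTriangular) (hud₂ : ∀ i, u₂ i i = 1)
    (h : a₁ * u₁ = a₂ * u₂) : a₁ = a₂ := by
  classical
  rw [← ha₁.diagonal_diag, ← ha₂.diagonal_diag]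
  refine congrArg diagonal (funext fun i => ?_)
  rw [diag_apply, diag_apply, ← ha₁.mul_unitriangular_apply_self hu₁ hud₁,
    ← ha₂.mul_unitriangular_apply_self hu₂ hud₂, h]

theorem IsUpperTriangular.inv_apply_self [DecidableEq ι] [Field K] {M : Matrix ι ι K}
    (hM : M.IsUpperTriangular) (hdet : IsUnit M.det) (i : ι) : M⁻¹ i i = (M i i)⁻¹ := by
  have := M.invertibleOfIsUnitDet hdet
  have h := congr_fun₂ (mul_nonsing_inv M hdet) i i
  rw [hM.mul_apply_self (blockTriangular_inv_of_blockTriangular hM), one_apply_eq] at h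
  exact eq_inv_of_mul_eq_one_right h

section OrderedField

variable [Field K] [LinearOrder K] [IsStrictOrderedRing K]

theorem IsUpperTriangular.det_pos [DecidableEq ι] {M : Matrix ι ι K} (hM : M.IsUpperTriangular)
    (hd : ∀ i, 0 < M i i) : 0 < M.det := by
  rw [det_of_isUpperTriangular hM]
  exact Finset.prod_pos fun i _ => hd i

theorem IsUpperTriangular.eq_one_of_transpose_mul_self_eq_one [DecidableEq ι] {P : Matrix ι ι K}
    (hP : P.IsUpperTriangular) (hd : ∀ i, 0 < P i i) (hO : Pᵀ * P = 1) : P = 1 := by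
  have := invertibleOfLeftInverse P Pᵀ hO
  have hPt : Pᵀ.IsUpperTriangular :=
    inv_eq_left_inv hO ▸ blockTriangular_inv_of_blockTriangular hP
  have hdiag : P.IsDiag := fun i j hij => hij.lt_or_gt.elim (fun h => hPt h) (fun h => hP h)
  have hsq : ∀ i, P i i = 1 := fun i => by
    have h := congr_fun₂ hO i i
    rw [hPt.mul_apply_self hP, one_apply_eq, transpose_apply, mul_self_eq_one_iff] at h
    exact h.resolve_right (by linarith [hd i])
  rw [← hdiag.diagonal_diag, ← diagonal_one]
  exact congrArg diagonal (funext hsq)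

theorem IsUpperTriangular.eq_of_transpose_mul_self_eq {T₁ T₂ : Matrix ι ι K}
    (h₁ : T₁.IsUpperTriangular) (hd₁ : ∀ i, 0 < T₁ i i)
    (h₂ : T₂.IsUpperTriangular) (hd₂ : ∀ i, 0 < T₂ i i) (h : T₁ᵀ * T₁ = T₂ᵀ * T₂) :
    T₁ = T₂ := by
  classical
  have hdet : IsUnit T₁.det := (h₁.det_pos hd₁).ne'.isUnit
  have := T₁.invertibleOfIsUnitDet hdet
  have hinv : T₁⁻¹.IsUpperTriangular := blockTriangular_inv_of_blockTriangular h₁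
  have hP : T₂ * T₁⁻¹ = 1 := IsUpperTriangular.eq_one_of_transpose_mul_self_eq_one (h₂.mul hinv)
    (fun i => by
      rw [h₂.mul_apply_self hinv, h₁.inv_apply_self hdet]
      exact mul_pos (hd₂ i) (inv_pos.2 (hd₁ i)))
    (transpose_mul_self_mul_inv_eq_one hdet h.symm)
  rw [mul_inv_eq_iff_eq_mul_of_invertible, Matrix.one_mul] at hP
  exact hP.symm

theorem IsUpperTriangular.eq_of_orthogonal_mul_eq [DecidableEq ι] {k₁ k₂ T₁ T₂ : Matrix ι ι K}
    (hk₁ : k₁ᵀ * k₁ = 1) (hk₂ : k₂ᵀ * k₂ = 1)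
    (h₁ : T₁.IsUpperTriangular) (hd₁ : ∀ i, 0 < T₁ i i)
    (h₂ : T₂.IsUpperTriangular) (hd₂ : ∀ i, 0 < T₂ i i) (h : k₁ * T₁ = k₂ * T₂) : T₁ = T₂ :=
  h₁.eq_of_transpose_mul_self_eq hd₁ h₂ hd₂ <| by
    rw [← transpose_mul_self_of_orthogonal_mul hk₁, h, transpose_mul_self_of_orthogonal_mul hk₂]

theorem IsUpperTriangular.exists_diag_pos_transpose_mul_self_eq {T : Matrix ι ι K}
    (hT : T.IsUpperTriangular) (hd : ∀ i, T i i ≠ 0) :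
    ∃ T' : Matrix ι ι K, T'.IsUpperTriangular ∧ (∀ i, 0 < T' i i) ∧ T'ᵀ * T' = Tᵀ * T := by
  classical
  set s : ι → K := fun i => |T i i| / T i i with hs_def
  have hs : (diagonal s).IsUpperTriangular := blockTriangular_diagonal s
  have hss : diagonal s * diagonal s = 1 := by
    rw [diagonal_mul_diagonal, ← diagonal_one]
    refine congrArg diagonal (funext fun i => ?_)
    rw [hs_def, div_mul_div_comm, abs_mul_abs_self, div_self (mul_ne_zero (hd i) (hd i))]
  refine ⟨diagonal s * T, hs.mul hT, fun i => ?_, ?_⟩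
  · rw [hs.mul_apply_self hT, diagonal_apply_eq, hs_def, div_mul_cancel₀ _ (hd i)]
    exact abs_pos.2 (hd i)
  · rw [transpose_mul, diagonal_transpose, Matrix.mul_assoc, ← Matrix.mul_assoc (diagonal s),
      hss, Matrix.one_mul]

end OrderedField

section Real

variable [WellFoundedLT ι] [LocallyFiniteOrderBot ι]

theorem PosDef.exists_isUpperTriangular_transpose_mul_self_eq {S : Matrix ι ι ℝ}
    (hS : S.PosDef) :
    ∃ T : Matrix ι ι ℝ, T.IsUpperTriangular ∧ (∀ i, 0 < T i i) ∧ Tᵀ * T = S := by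
  have hd : ∀ i, 0 < LDL.diagEntries hS i := by
    refine posDef_diagonal_iff.1 ?_
    rw [← LDL.diag, LDL.diag_eq_lowerInv_conj]
    exact hS.mul_mul_conjTranspose_same (vecMul_injective_of_invertible _)
  have hlow : (LDL.lower hS).IsLowerTriangular :=
    blockTriangular_inv_of_blockTriangular fun _ _ h => LDL.lowerInv_triangular hS h
  set D : ι → ℝ := fun i => √(LDL.diagEntries hS i)
  have hT₀ : (diagonal D * (LDL.lower hS)ᵀ).IsUpperTriangular :=
    (blockTriangular_diagonal D).mul fun _ _ h => hlow (OrderDual.toDual_lt_toDual.2 h)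
  have hT₀S : (diagonal D * (LDL.lower hS)ᵀ)ᵀ * (diagonal D * (LDL.lower hS)ᵀ) = S := by
    have hDD : diagonal D * diagonal D = LDL.diag hS := by
      rw [diagonal_mul_diagonal]
      exact congrArg diagonal (funext fun i => Real.mul_self_sqrt (hd i).le)
    conv_rhs => rw [← LDL.lower_conj_diag hS, conjTranspose_eq_transpose_of_trivial, ← hDD]
    simp only [transpose_mul, transpose_transpose, diagonal_transpose, Matrix.mul_assoc]
  have hT₀d : ∀ i, (diagonal D * (LDL.lower hS)ᵀ) i i ≠ 0 := by
    have hdet := hS.det_pos.ne'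
    rw [← hT₀S, det_mul, det_transpose, det_of_isUpperTriangular hT₀, ← sq,
      pow_ne_zero_iff two_ne_zero, Finset.prod_ne_zero_iff] at hdet
    exact fun i => hdet i (Finset.mem_univ i)
  obtain ⟨T, hT, hTd, hTT⟩ := hT₀.exists_diag_pos_transpose_mul_self_eq hT₀d
  exact ⟨T, hT, hTd, hTT.trans hT₀S⟩

theorem exists_orthogonal_mul_isUpperTriangular [DecidableEq ι] {G : Matrix ι ι ℝ}
    (hG : IsUnit G.det) :
    ∃ k T : Matrix ι ι ℝ,
      kᵀ * k = 1 ∧ T.IsUpperTriangular ∧ (∀ i, 0 < T i i) ∧ k * T = G := by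
  have hS : (Gᵀ * G).PosDef := by
    simpa only [conjTranspose_eq_transpose_of_trivial] using PosDef.conjTranspose_mul_self G
      (mulVec_injective_iff_isUnit.2 ((isUnit_iff_isUnit_det G).2 hG))
  obtain ⟨T, hT, hTd, hTS⟩ := hS.exists_isUpperTriangular_transpose_mul_self_eq
  have hdet : IsUnit T.det := (hT.det_pos hTd).ne'.isUnit
  exact ⟨G * T⁻¹, T, transpose_mul_self_mul_inv_eq_one hdet hTS.symm, hT, hTd,
    nonsing_inv_mul_cancel_right T G hdet⟩

end Real

namespace SpecialLinearGroup

variable [DecidableEq ι]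

theorem exists_orthogonal_mul_isUpperTriangular [WellFoundedLT ι] [LocallyFiniteOrderBot ι]
    (g : SpecialLinearGroup ι ℝ) :
    ∃ k T : SpecialLinearGroup ι ℝ, (k : Matrix ι ι ℝ)ᵀ * k = 1 ∧
      (T : Matrix ι ι ℝ).IsUpperTriangular ∧ (∀ i, 0 < (T : Matrix ι ι ℝ) i i) ∧ k * T = g := by
  obtain ⟨k, T, hk, hT, hTd, hkT⟩ :=
    Matrix.exists_orthogonal_mul_isUpperTriangular (G := (g : Matrix ι ι ℝ))
      (by rw [g.det_coe]; exact isUnit_one)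
  have hT1 : T.det = 1 := by
    have h := congrArg det (transpose_mul_self_of_orthogonal_mul hk T)
    rw [hkT, det_mul, det_mul, det_transpose, det_transpose, g.det_coe, one_mul, eq_comm,
      mul_self_eq_one_iff] at h
    exact h.resolve_right (by linarith [hT.det_pos hTd])
  have hk1 : k.det = 1 := by simpa [hT1] using congrArg det hkT
  exact ⟨⟨k, hk1⟩, ⟨T, hT1⟩, hk, hT, hTd, Subtype.ext hkT⟩

theorem exists_isDiag_mul_unitriangular [Field K] {T : SpecialLinearGroup ι K}
    (hT : (T : Matrix ι ι K).IsUpperTriangular) :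
    ∃ a u : SpecialLinearGroup ι K, (a : Matrix ι ι K).IsDiag ∧
      (∀ i, (a : Matrix ι ι K) i i = (T : Matrix ι ι K) i i) ∧
      (u : Matrix ι ι K).IsUpperTriangular ∧ (∀ i, (u : Matrix ι ι K) i i = 1) ∧ a * u = T := by
  have hprod : ∏ i, (T : Matrix ι ι K) i i = 1 := (det_of_isUpperTriangular hT).symm.trans T.det_coe
  have hd : ∀ i, (T : Matrix ι ι K) i i ≠ 0 := by
    have h : ∏ i, (T : Matrix ι ι K) i i ≠ 0 := by rw [hprod]; exact one_ne_zero
    exact fun i => Finset.prod_ne_zero_iff.1 h i (Finset.mem_univ i)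
  have hs : (diagonal fun i => ((T : Matrix ι ι K) i i)⁻¹).IsUpperTriangular :=
    blockTriangular_diagonal _
  have hmul : (diagonal fun i => (T : Matrix ι ι K) i i) *
      ((diagonal fun i => ((T : Matrix ι ι K) i i)⁻¹) * T) = T := by
    rw [← Matrix.mul_assoc, diagonal_mul_diagonal]
    simp [mul_inv_cancel₀ (hd _)]
  refine ⟨⟨diagonal fun i => T i i, by rw [det_diagonal, hprod]⟩,
    ⟨diagonal (fun i => (T i i)⁻¹) * T, by
      rw [det_mul, det_diagonal, Finset.prod_inv_distrib, hprod, T.det_coe, inv_one, one_mul]⟩,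
    isDiag_diagonal _, fun i => diagonal_apply_eq _ _, hs.mul hT, fun i => ?_, Subtype.ext hmul⟩
  rw [coe_mk, hs.mul_apply_self hT, diagonal_apply_eq, inv_mul_cancel₀ (hd i)]

end SpecialLinearGroup

end Matrix

/-- Refined Iwasawa decomposition of `SL_{n+1}(ℝ)`:
`(k, a, u) ↦ k·a·u` is a bijection `K × A × U → SL_{n+1}(ℝ)`, where `K = SO(n+1)`,
`A` the positive diagonal matrices of determinant 1, and `U` the unipotent upper
triangular matrices. -/
theorem sl_real_refined_iwasawa (n : ℕ)
    (K A U : Set (Matrix.SpecialLinearGroup (Fin (n + 1)) ℝ))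
    (hK : K = {k : Matrix.SpecialLinearGroup (Fin (n + 1)) ℝ |
                (k : Matrix (Fin (n + 1)) (Fin (n + 1)) ℝ)ᵀ
                  * (k : Matrix (Fin (n + 1)) (Fin (n + 1)) ℝ) = 1})
    (hA : A = {a : Matrix.SpecialLinearGroup (Fin (n + 1)) ℝ |
                (∀ i j, i ≠ j → (a : Matrix (Fin (n + 1)) (Fin (n + 1)) ℝ) i j = 0) ∧
                ∀ i, 0 < (a : Matrix (Fin (n + 1)) (Fin (n + 1)) ℝ) i i})
    (hU : U = {u : Matrix.SpecialLinearGroup (Fin (n + 1)) ℝ |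
                (∀ i, (u : Matrix (Fin (n + 1)) (Fin (n + 1)) ℝ) i i = 1) ∧
                ∀ i j, j < i → (u : Matrix (Fin (n + 1)) (Fin (n + 1)) ℝ) i j = 0}) :
    Function.Bijective
      (fun x : K × A × U =>
        ((x.1 : Matrix.SpecialLinearGroup (Fin (n + 1)) ℝ)
          * (x.2.1 : Matrix.SpecialLinearGroup (Fin (n + 1)) ℝ)
          * (x.2.2 : Matrix.SpecialLinearGroup (Fin (n + 1)) ℝ))) := by
  subst hK hA hU
  constructor
  · rintro ⟨⟨k₁, hk₁⟩, ⟨a₁, ha₁, had₁⟩, ⟨u₁, hud₁, hu₁⟩⟩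
      ⟨⟨k₂, hk₂⟩, ⟨a₂, ha₂, had₂⟩, ⟨u₂, hud₂, hu₂⟩⟩ h
    simp only [mul_assoc] at h
    have hau : (a₁ : Matrix (Fin (n + 1)) (Fin (n + 1)) ℝ) * u₁ = a₂ * u₂ :=
      IsUpperTriangular.eq_of_orthogonal_mul_eq hk₁ hk₂
        ((IsDiag.isUpperTriangular ha₁).mul hu₁)
        (fun i => IsDiag.mul_unitriangular_apply_self ha₁ hu₁ hud₁ i ▸ had₁ i)
        ((IsDiag.isUpperTriangular ha₂).mul hu₂)
        (fun i => IsDiag.mul_unitriangular_apply_self ha₂ hu₂ hud₂ i ▸ had₂ i)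
        (congrArg Subtype.val h)
    obtain rfl : k₁ = k₂ := mul_right_cancel (h.trans (congrArg _ (Subtype.ext hau).symm))
    obtain rfl : a₁ = a₂ :=
      Subtype.ext (IsDiag.eq_of_mul_unitriangular_eq ha₁ hu₁ hud₁ ha₂ hu₂ hud₂ hau)
    obtain rfl : u₁ = u₂ := mul_left_cancel (Subtype.ext hau)
    rfl
  · intro g
    obtain ⟨k, T, hk, hT, hTd, rfl⟩ := SpecialLinearGroup.exists_orthogonal_mul_isUpperTriangular g
    obtain ⟨a, u, ha, haT, hu, hud, rfl⟩ := SpecialLinearGroup.exists_isDiag_mul_unitriangular hT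
    exact ⟨⟨⟨k, hk⟩, ⟨a, ha, fun i => haT i ▸ hTd i⟩, ⟨u, hud, hu⟩⟩,
      mul_assoc k a u⟩
end

section
/- Every g ∈ SL₂(ℝ) can be written as g = k₁·u·k₂ with k₁, k₂ ∈ SO(2) and u an upper triangular matrix with both diagonal entries equal to 1. (Kostant decomposition G = KUK for the rank-one group SL₂(ℝ).) -/
/-!
Write `g = !![a, b; c, d]`. Since `det g = 1`, the binary quadratic form `v ↦ |g v|² - |v|²`
has discriminant `tr (gᵀ g) - 2 = (a - d)² + (b + c)² ≥ 0`, so it is isotropic: some unit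
vector `v` satisfies `|g v| = 1`. If `k₂` is the rotation taking `v` to `e₁` and `k₁` the one
taking `e₁` to `g v`, then `k₁⁻¹ g k₂⁻¹` fixes `e₁` and has determinant `1`, so it is unipotent
upper triangular.
-/

open Matrix

theorem exists_ne_zero_quadratic_eq_zero {α β γ : ℝ} (h : α * γ ≤ β ^ 2) :
    ∃ p q : ℝ, (p ≠ 0 ∨ q ≠ 0) ∧ α * p ^ 2 + 2 * β * p * q + γ * q ^ 2 = 0 := by
  by_cases hα : α = 0
  · exact ⟨1, 0, .inl one_ne_zero, by simp [hα]⟩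
  · have hδ : 0 ≤ β ^ 2 - α * γ := sub_nonneg.mpr h
    refine ⟨-β + √(β ^ 2 - α * γ), α, .inr hα, ?_⟩
    linear_combination α * Real.sq_sqrt hδ

theorem exists_sq_add_sq_eq_one_quadratic_eq_zero {α β γ : ℝ} (h : α * γ ≤ β ^ 2) :
    ∃ p q : ℝ, p ^ 2 + q ^ 2 = 1 ∧ α * p ^ 2 + 2 * β * p * q + γ * q ^ 2 = 0 := by
  obtain ⟨p, q, hpq, hQ⟩ := exists_ne_zero_quadratic_eq_zero h
  have hpos : 0 < p ^ 2 + q ^ 2 := by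
    rcases hpq with hp | hq
    · nlinarith [sq_pos_of_ne_zero hp, sq_nonneg q]
    · nlinarith [sq_pos_of_ne_zero hq, sq_nonneg p]
  set n := √(p ^ 2 + q ^ 2)
  have hn : n ^ 2 = p ^ 2 + q ^ 2 := Real.sq_sqrt hpos.le
  have hn0 : n ≠ 0 := by positivity
  refine ⟨p / n, q / n, ?_, ?_⟩
  · field_simp
    exact hn.symm
  · field_simp
    linear_combination hQ

theorem exists_unit_vector_with_unit_image_of_det_eq_one {a b c d : ℝ} (h : a * d - b * c = 1) :
    ∃ p q : ℝ, p ^ 2 + q ^ 2 = 1 ∧ (a * p + b * q) ^ 2 + (c * p + d * q) ^ 2 = 1 := by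
  have hdisc : (a ^ 2 + c ^ 2 - 1) * (b ^ 2 + d ^ 2 - 1) ≤ (a * b + c * d) ^ 2 := by
    nlinarith [sq_nonneg (a - d), sq_nonneg (b + c)]
  obtain ⟨p, q, hpq, hQ⟩ := exists_sq_add_sq_eq_one_quadratic_eq_zero hdisc
  exact ⟨p, q, hpq, by linear_combination hQ + hpq⟩

namespace Matrix.SpecialLinearGroup

variable {R : Type*} [CommRing R]

def rotation (p q : R) (h : p ^ 2 + q ^ 2 = 1) : SpecialLinearGroup (Fin 2) R :=
  ⟨!![p, -q; q, p], by rw [det_fin_two_of]; linear_combination h⟩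

theorem coe_rotation (p q : R) (h : p ^ 2 + q ^ 2 = 1) :
    (rotation p q h : Matrix (Fin 2) (Fin 2) R) = !![p, -q; q, p] := rfl

theorem rotation_transpose_mul_self (p q : R) (h : p ^ 2 + q ^ 2 = 1) :
    (rotation p q h : Matrix (Fin 2) (Fin 2) R)ᵀ * rotation p q h = 1 := by
  rw [← Matrix.ext_iff]
  simp only [Fin.forall_fin_two, coe_rotation, mul_apply, transpose_apply, of_apply, cons_val',
    cons_val_zero, cons_val_one, cons_val_fin_one, Fin.sum_univ_two, one_apply_eq,
    one_apply_ne zero_ne_one, one_apply_ne one_ne_zero]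
  exact ⟨⟨by linear_combination h, by ring⟩, by ring, by linear_combination h⟩

theorem rotation_mul_transpose_self (p q : R) (h : p ^ 2 + q ^ 2 = 1) :
    (rotation p q h : Matrix (Fin 2) (Fin 2) R) * (rotation p q h)ᵀ = 1 :=
  mul_eq_one_comm.mp (rotation_transpose_mul_self p q h)

end Matrix.SpecialLinearGroup

theorem eq_unipotent_of_det_eq_one {R : Type*} [CommRing R] {M : Matrix (Fin 2) (Fin 2) R}
    (hdet : M.det = 1) (h00 : M 0 0 = 1) (h10 : M 1 0 = 0) : M = !![1, M 0 1; 0, 1] := by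
  have h11 : M 1 1 = 1 := by simpa [det_fin_two, h00, h10] using hdet
  rw [M.eta_fin_two, h00, h10, h11]
  simp

/-- Kostant decomposition of `SL₂(ℝ)`: every `g` can be written as
`k₁·u·k₂` with `k₁, k₂ ∈ SO(2)` and `u` unipotent upper triangular. -/
theorem sl2_real_kostant_decomposition
    (g : Matrix.SpecialLinearGroup (Fin 2) ℝ) :
    ∃ k₁ k₂ : Matrix.SpecialLinearGroup (Fin 2) ℝ, ∃ x : ℝ,
      (k₁ : Matrix (Fin 2) (Fin 2) ℝ)ᵀ * (k₁ : Matrix (Fin 2) (Fin 2) ℝ) = 1 ∧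
      (k₂ : Matrix (Fin 2) (Fin 2) ℝ)ᵀ * (k₂ : Matrix (Fin 2) (Fin 2) ℝ) = 1 ∧
      (g : Matrix (Fin 2) (Fin 2) ℝ)
        = (k₁ : Matrix (Fin 2) (Fin 2) ℝ) * !![1, x; 0, 1] * (k₂ : Matrix (Fin 2) (Fin 2) ℝ) := by
  obtain ⟨a, b, c, d, hg⟩ : ∃ a b c d : ℝ, (g : Matrix (Fin 2) (Fin 2) ℝ) = !![a, b; c, d] :=
    ⟨_, _, _, _, eta_fin_two _⟩
  have hdet : a * d - b * c = 1 := by simpa [hg, det_fin_two_of] using g.det_coe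
  obtain ⟨p, q, hpq, hgv⟩ := exists_unit_vector_with_unit_image_of_det_eq_one hdet
  let k₁ := SpecialLinearGroup.rotation (a * p + b * q) (c * p + d * q) hgv
  let k₂ := SpecialLinearGroup.rotation p (-q) (by rwa [neg_sq])
  have hk₁ : (k₁ : Matrix (Fin 2) (Fin 2) ℝ) * (k₁ : Matrix (Fin 2) (Fin 2) ℝ)ᵀ = 1 :=
    SpecialLinearGroup.rotation_mul_transpose_self ..
  have hk₂ : (k₂ : Matrix (Fin 2) (Fin 2) ℝ)ᵀ * (k₂ : Matrix (Fin 2) (Fin 2) ℝ) = 1 :=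
    SpecialLinearGroup.rotation_transpose_mul_self ..
  let u := (k₁ : Matrix (Fin 2) (Fin 2) ℝ)ᵀ * g * (k₂ : Matrix (Fin 2) (Fin 2) ℝ)ᵀ
  have hu : u = !![1, u 0 1; 0, 1] := by
    refine eq_unipotent_of_det_eq_one (by simp [u]) ?_ ?_ <;>
      simp only [u, k₁, k₂, SpecialLinearGroup.coe_rotation, hg, mul_apply, transpose_apply,
        of_apply, cons_val', cons_val_zero, cons_val_one, cons_val_fin_one, Fin.sum_univ_two]
    · linear_combination hgv
    · ring
  refine ⟨k₁, k₂, u 0 1, SpecialLinearGroup.rotation_transpose_mul_self .., hk₂, ?_⟩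
  rw [← hu, ← mul_assoc, ← mul_assoc, hk₁, one_mul, mul_assoc, hk₂, mul_one]
end
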